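/- arXiv:1111.2419 — 4 statements merged into one kernel-verified Lean document; each statement's English description precedes it below -/
import Mathlib

section
/- If B > 2 and A = max_{0 ≤ x ≤ 1} (B(x-1/2)² + H(x)), then the equation A - B(x-1/2)² = H(x) has at least two distinct solutions in [0,1]. -/
open Real Set

noncomputable def H (x : ℝ) : ℝ := -x * Real.log x - (1 - x) * Real.log (1 - x)

lemma H_symm (x : ℝ) : H (1 - x) = H x := by
  unfold H
  ring_nf

lemma H_half : H (1/2) = Real.log 2 := by
  unfold H
  rw [show (1:ℝ) - 1/2 = 1/2 by norm_num, show Real.log (1/2) = -Real.log 2 by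
    rw [show (1:ℝ)/2 = 2⁻¹ by norm_num, Real.log_inv]]
  ring

lemma key_ineq (B u : ℝ) (hB : 2 < B) (hu0 : 0 < u) (hu1 : u < 1)
    (hlt : 2 * (1 + u) < B * (1 - u)) :
    Real.log 2 < B * (u/2)^2 + H (1/2 + u/2) := by
  have h1u : (0:ℝ) < 1 + u := by linarith
  have h1u' : (0:ℝ) < 1 - u := by linarith
  have hx : (1:ℝ)/2 + u/2 = (1+u)/2 := by ring
  have hx' : (1:ℝ) - (1/2 + u/2) = (1-u)/2 := by ring
  have hl1 : Real.log ((1+u)/2) = Real.log (1+u) - Real.log 2 :=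
    Real.log_div (by linarith) (by norm_num)
  have hl2 : Real.log ((1-u)/2) = Real.log (1-u) - Real.log 2 :=
    Real.log_div (by linarith) (by norm_num)
  set L1 := Real.log (1+u) with hL1
  set L2 := Real.log (1-u) with hL2
  have hsum : L1 + L2 = Real.log (1 - u^2) := by
    rw [hL1, hL2, ← Real.log_mul (by linarith) (by linarith)]
    ring_nf
  have hsq : (0:ℝ) < 1 - u^2 := by nlinarith
  have h2 : L1 + L2 ≤ -u^2 := by
    rw [hsum]
    have := Real.log_le_sub_one_of_pos hsq
    linarith
  have h3 : (L1 - L2) * (1 - u) ≤ 2 * u := by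
    have hd : Real.log ((1+u)/(1-u)) = L1 - L2 := Real.log_div (by linarith) (by linarith)
    have := Real.log_le_sub_one_of_pos (div_pos h1u h1u')
    rw [hd] at this
    have h4 : (1+u)/(1-u) - 1 = 2*u/(1-u) := by field_simp; ring
    rw [h4] at this
    calc (L1 - L2) * (1 - u) ≤ (2*u/(1-u)) * (1-u) := by
          apply mul_le_mul_of_nonneg_right this (le_of_lt h1u')
      _ = 2 * u := by field_simp
  unfold H
  rw [hx, show (1:ℝ) - (1+u)/2 = (1-u)/2 by ring, hl1, hl2]
  have hgoal : (1+u) * L1 + (1-u) * L2 < B * u^2 / 2 := by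
    nlinarith [mul_pos hu0 hu0, mul_le_mul_of_nonneg_left h3 hu0.le,
      mul_lt_mul_of_pos_left hlt (mul_pos hu0 hu0)]
  nlinarith [hgoal]

theorem F_eq_H_two_solutions (A B : ℝ) (hB : 2 < B)
    (hA : IsGreatest ((fun x => B * (x - 1/2)^2 + H x) '' Set.Icc 0 1) A) :
    ∃ x ∈ Set.Icc (0:ℝ) 1, ∃ y ∈ Set.Icc (0:ℝ) 1, x ≠ y ∧
      A - B * (x - 1/2)^2 = H x ∧ A - B * (y - 1/2)^2 = H y := by
  obtain ⟨⟨x₀, hx₀, hfx₀⟩, hub⟩ := hA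
  simp only at hfx₀
  set u : ℝ := (B - 2) / (2 * (B + 2)) with hu
  have hB2 : (0:ℝ) < B + 2 := by linarith
  have hu0 : 0 < u := div_pos (by linarith) (by linarith)
  have hu1 : u < 1 := by
    rw [hu, div_lt_one (by linarith)]; linarith
  have hlt : 2 * (1 + u) < B * (1 - u) := by
    rw [hu]
    rw [div_lt_iff₀ (by linarith)] at hu1
    have h : u * (2 * (B + 2)) = B - 2 := by
      rw [hu]; field_simp
    nlinarith [h]
  have hkey := key_ineq B u hB hu0 hu1 hlt
  have hmem : (1/2 + u/2 : ℝ) ∈ Set.Icc (0:ℝ) 1 := by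
    constructor <;> [linarith; linarith]
  have hAge : B * ((1/2 + u/2) - 1/2)^2 + H (1/2 + u/2) ≤ A :=
    hub ⟨_, hmem, rfl⟩
  have hA_gt : Real.log 2 < A := by
    have : ((1/2 + u/2 : ℝ) - 1/2)^2 = (u/2)^2 := by ring
    rw [this] at hAge
    linarith
  have hx₀ne : x₀ ≠ 1/2 := by
    intro h
    rw [h] at hfx₀
    rw [show ((1:ℝ)/2 - 1/2)^2 = 0 by ring, H_half] at hfx₀
    simp at hfx₀
    linarith
  refine ⟨x₀, hx₀, 1 - x₀, ⟨by linarith [hx₀.2], by linarith [hx₀.1]⟩, ?_, ?_, ?_⟩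
  · intro h
    apply hx₀ne
    linarith
  · linarith [hfx₀]
  · rw [H_symm]
    have : ((1:ℝ) - x₀ - 1/2)^2 = (x₀ - 1/2)^2 := by ring
    rw [this]
    linarith [hfx₀]
end

section
/- With B = 3·log 2, the maximum over [0,1] of G(x) = B(x-1/2)² + H(x) is attained at x = 1/3 and equals log 3 - (7/12)·log 2. -/
open Real Set

/-- The derivative of `G`. -/
noncomputable def psi (x : ℝ) : ℝ :=
  6 * Real.log 2 * (x - 1/2) + Real.log (1 - x) - Real.log x

lemma hasDerivAt_psi {x : ℝ} (hx0 : 0 < x) (hx1 : x < 1) :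
    HasDerivAt psi (6 * Real.log 2 - 1/(1-x) - 1/x) x := by
  have h1 : (0:ℝ) < 1 - x := by linarith
  have hlin : HasDerivAt (fun y : ℝ => 6 * Real.log 2 * (y - 1/2)) (6 * Real.log 2) x := by
    exact (((hasDerivAt_id x).sub_const (1/2)).const_mul (6 * Real.log 2)).congr_deriv (by ring)
  have hlog1 : HasDerivAt (fun y : ℝ => Real.log (1 - y)) (-(1/(1-x))) x := by
    have h := (Real.hasDerivAt_log h1.ne').comp x
      ((hasDerivAt_const x (1:ℝ)).sub (hasDerivAt_id x))
    exact h.congr_deriv (by ring)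
  have hlog2 : HasDerivAt (fun y : ℝ => Real.log y) (1/x) x := by
    simpa [one_div] using Real.hasDerivAt_log hx0.ne'
  have := (hlin.add hlog1).sub hlog2
  exact this.congr_deriv (by ring)

lemma hasDerivAt_G {G : ℝ → ℝ}
    (hG : G = fun x => 3 * Real.log 2 * (x - 1/2)^2 + H x)
    {x : ℝ} (hx0 : 0 < x) (hx1 : x < 1) : HasDerivAt G (psi x) x := by
  have h1 : (0:ℝ) < 1 - x := by linarith
  have hsq : HasDerivAt (fun y : ℝ => 3 * Real.log 2 * (y - 1/2)^2)
      (3 * Real.log 2 * (2 * (x - 1/2))) x := by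
    exact ((((hasDerivAt_id x).sub_const (1/2)).pow 2).const_mul (3 * Real.log 2)).congr_deriv (by norm_num)
  have hxlog : HasDerivAt (fun y : ℝ => y * Real.log y) (Real.log x + 1) x :=
    Real.hasDerivAt_mul_log hx0.ne'
  have h1xlog : HasDerivAt (fun y : ℝ => (1 - y) * Real.log (1 - y))
      ((Real.log (1-x) + 1) * (-1)) x := by
    have h := (Real.hasDerivAt_mul_log h1.ne').comp x
      ((hasDerivAt_const x (1:ℝ)).sub (hasDerivAt_id x))
    exact h.congr_deriv (by ring)
  have hH : HasDerivAt H (Real.log (1-x) - Real.log x) x := by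
    have : HasDerivAt (fun y : ℝ => -(y * Real.log y) - (1 - y) * Real.log (1 - y))
        (-(Real.log x + 1) - (Real.log (1-x) + 1) * (-1)) x := hxlog.neg.sub h1xlog
    have heq : H = fun y : ℝ => -(y * Real.log y) - (1 - y) * Real.log (1 - y) := by
      funext y; unfold H; ring
    rw [heq]
    convert this using 1; ring
  rw [hG]
  have := hsq.add hH
  exact this.congr_deriv (by unfold psi; ring)

lemma psi_third : psi (1/3) = 0 := by
  unfold psi
  have h1 : Real.log (1 - 1/3 : ℝ) = Real.log 2 - Real.log 3 := by
    rw [show (1 - 1/3 : ℝ) = 2/3 by norm_num, Real.log_div (by norm_num) (by norm_num)]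
  have h2 : Real.log (1/3 : ℝ) = -Real.log 3 := by
    rw [show (1/3 : ℝ) = 3⁻¹ by norm_num, Real.log_inv]
  rw [h1, h2]; ring

lemma psi_half : psi (1/2) = 0 := by
  unfold psi
  norm_num

lemma convexOn_psi : ConvexOn ℝ (Ioc (0:ℝ) (1/2)) psi := by
  have hD : Convex ℝ (Ioc (0:ℝ) (1/2)) := convex_Ioc _ _
  have hint : interior (Ioc (0:ℝ) (1/2)) = Ioo (0:ℝ) (1/2) := interior_Ioc
  apply MonotoneOn.convexOn_of_deriv hD
  · intro x hx
    have hx0 : 0 < x := hx.1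
    have hx1 : x < 1 := lt_of_le_of_lt hx.2 (by norm_num)
    exact ((hasDerivAt_psi hx0 hx1).continuousAt).continuousWithinAt
  · rw [hint]
    intro x hx
    have hx1 : x < 1 := lt_trans hx.2 (by norm_num)
    exact ((hasDerivAt_psi hx.1 hx1).differentiableAt).differentiableWithinAt
  · rw [hint]
    intro x hx y hy hxy
    have hx1 : x < 1 := lt_trans hx.2 (by norm_num)
    have hy1 : y < 1 := lt_trans hy.2 (by norm_num)
    rw [(hasDerivAt_psi hx.1 hx1).deriv, (hasDerivAt_psi hy.1 hy1).deriv]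
    have hx0 : 0 < x := hx.1
    have hy0 : 0 < y := hy.1
    have h1x : (0:ℝ) < 1 - x := by linarith
    have h1y : (0:ℝ) < 1 - y := by linarith
    have key : 1/(1-y) + 1/y ≤ 1/(1-x) + 1/x := by
      rw [div_add_div _ _ h1y.ne' hy0.ne', div_add_div _ _ h1x.ne' hx0.ne',
        div_le_div_iff₀ (by positivity) (by positivity)]
      nlinarith [hx.2, hy.2, mul_pos hx0 hy0]
    linarith

lemma psi_nonneg {x : ℝ} (hx0 : 0 < x) (hx3 : x ≤ 1/3) : 0 ≤ psi x := by
  have hd : (0:ℝ) < 1/2 - x := by linarith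
  set a : ℝ := (1/6) / (1/2 - x) with ha
  have ha0 : 0 < a := by positivity
  have ha1 : a ≤ 1 := by
    rw [ha, div_le_one hd]; linarith
  have hb0 : 0 ≤ 1 - a := by linarith
  have hmemx : x ∈ Ioc (0:ℝ) (1/2) := ⟨hx0, by linarith⟩
  have hmemh : (1/2 : ℝ) ∈ Ioc (0:ℝ) (1/2) := ⟨by norm_num, le_refl _⟩
  have hcomb : a * x + (1 - a) * (1/2) = 1/3 := by
    have key : a * (1/2 - x) = 1/6 := by
      rw [ha]; exact div_mul_cancel₀ _ hd.ne'
    linear_combination -key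
  have := convexOn_psi.2 hmemx hmemh ha0.le hb0 (by ring)
  rw [smul_eq_mul, smul_eq_mul, smul_eq_mul, smul_eq_mul, hcomb, psi_third, psi_half] at this
  nlinarith
-- note: `this : 0 ≤ a * psi x + (1-a) * 0`

lemma psi_nonpos {x : ℝ} (hx3 : 1/3 ≤ x) (hxh : x ≤ 1/2) : psi x ≤ 0 := by
  set a : ℝ := (1/2 - x) / (1/6) with ha
  have ha0 : 0 ≤ a := by
    apply div_nonneg (by linarith) (by norm_num)
  have hb0 : 0 ≤ 1 - a := by
    have : a ≤ 1 := by rw [ha, div_le_one (by norm_num)]; linarith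
    linarith
  have hmem3 : (1/3 : ℝ) ∈ Ioc (0:ℝ) (1/2) := ⟨by norm_num, by norm_num⟩
  have hmemh : (1/2 : ℝ) ∈ Ioc (0:ℝ) (1/2) := ⟨by norm_num, le_refl _⟩
  have hcomb : a * (1/3) + (1 - a) * (1/2) = x := by
    rw [ha]; field_simp; ring
  have := convexOn_psi.2 hmem3 hmemh ha0 hb0 (by ring)
  rw [smul_eq_mul, smul_eq_mul, smul_eq_mul, smul_eq_mul, hcomb, psi_third, psi_half] at this
  linarith

lemma continuous_G {G : ℝ → ℝ}
    (hG : G = fun x => 3 * Real.log 2 * (x - 1/2)^2 + H x) : Continuous G := by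
  have hH : Continuous H := by
    have heq : H = fun y : ℝ => -(y * Real.log y) - ((1 - y) * Real.log (1 - y)) := by
      funext y; unfold H; ring
    rw [heq]
    exact (Real.continuous_mul_log.neg).sub
      (Real.continuous_mul_log.comp (continuous_const.sub continuous_id))
  rw [hG]
  exact (continuous_const.mul ((continuous_id.sub continuous_const).pow 2)).add hH

theorem explicit_max (G : ℝ → ℝ)
    (hG : G = fun x => 3 * Real.log 2 * (x - 1/2)^2 + H x) :
    IsMaxOn G (Set.Icc 0 1) (1/3) ∧ G (1/3) = Real.log 3 - 7/12 * Real.log 2 := by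
  have hcont := continuous_G hG
  -- G is monotone on [0, 1/3]
  have hmono : MonotoneOn G (Icc (0:ℝ) (1/3)) := by
    apply monotoneOn_of_hasDerivWithinAt_nonneg (convex_Icc _ _) hcont.continuousOn
      (f' := psi)
    · intro x hx
      rw [interior_Icc] at hx
      exact (hasDerivAt_G hG hx.1 (by linarith [hx.2])).hasDerivWithinAt
    · intro x hx
      rw [interior_Icc] at hx
      exact psi_nonneg hx.1 hx.2.le
  -- G is antitone on [1/3, 1/2]
  have hanti : AntitoneOn G (Icc (1/3:ℝ) (1/2)) := by
    apply antitoneOn_of_hasDerivWithinAt_nonpos (convex_Icc _ _) hcont.continuousOn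
      (f' := psi)
    · intro x hx
      rw [interior_Icc] at hx
      exact (hasDerivAt_G hG (by linarith [hx.1]) (by linarith [hx.2])).hasDerivWithinAt
    · intro x hx
      rw [interior_Icc] at hx
      exact psi_nonpos hx.1.le hx.2.le
  -- symmetry
  have hsym : ∀ x : ℝ, G (1 - x) = G x := by
    intro x
    rw [hG]
    simp only
    unfold H
    have h1 : (1:ℝ) - (1 - x) = x := by ring
    rw [h1]
    ring
  -- maximum on the left half
  have hhalf : ∀ x ∈ Icc (0:ℝ) (1/2), G x ≤ G (1/3) := by
    intro x hx
    rcases le_or_gt x (1/3) with h | h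
    · exact hmono ⟨hx.1, h⟩ ⟨by norm_num, le_refl _⟩ h
    · exact hanti ⟨by norm_num, by norm_num⟩ ⟨h.le, hx.2⟩ h.le
  constructor
  · rw [isMaxOn_iff]
    intro x hx
    rcases le_or_gt x (1/2) with h | h
    · exact hhalf x ⟨hx.1, h⟩
    · rw [← hsym x]
      exact hhalf (1 - x) ⟨by linarith [hx.2], by linarith⟩
  · rw [hG]
    simp only
    unfold H
    have h1 : Real.log (1 - 1/3 : ℝ) = Real.log 2 - Real.log 3 := by
      rw [show (1 - 1/3 : ℝ) = 2/3 by norm_num, Real.log_div (by norm_num) (by norm_num)]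
    have h2 : Real.log (1/3 : ℝ) = -Real.log 3 := by
      rw [show (1/3 : ℝ) = 3⁻¹ by norm_num, Real.log_inv]
    rw [h1, h2]
    ring
end

section
/- Let B > 2, A = max_{[0,1]}(B(x-1/2)² + H(x)), U = √(AB) - B/2, V = (2B+4√(AB))/(4A-B), M = A - B/4. Then g(x) = U·x - M + H(x)/(1 + V·x) satisfies g(x) ≤ 0 for all x ∈ [0,1], and g(x) = 0 has at least two distinct solutions in [0,1]. -/
open Real Set

set_option maxHeartbeats 1000000 in
theorem g_nonpos_two_roots (A B : ℝ) (hB : 2 < B)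
    (hA : IsGreatest ((fun x => B * (x - 1/2)^2 + H x) '' Set.Icc 0 1) A)
    (U V M : ℝ) (hU : U = Real.sqrt (A * B) - B/2)
    (hV : V = (2 * B + 4 * Real.sqrt (A * B)) / (4 * A - B)) (hM : M = A - B/4)
    (g : ℝ → ℝ) (hg : g = fun x => U * x - M + H x / (1 + V * x)) :
    (∀ x ∈ Set.Icc (0:ℝ) 1, g x ≤ 0) ∧
    ∃ x ∈ Set.Icc (0:ℝ) 1, ∃ y ∈ Set.Icc (0:ℝ) 1, x ≠ y ∧ g x = 0 ∧ g y = 0 := by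
  obtain ⟨hmem, hub⟩ := hA
  obtain ⟨x₀, hx₀mem, hx₀⟩ := hmem
  simp only at hx₀
  have hfle : ∀ x ∈ Set.Icc (0:ℝ) 1, B * (x - 1/2)^2 + H x ≤ A := by
    intro x hx
    exact hub (Set.mem_image_of_mem _ hx)
  -- A > B/4
  have hB0' : (0:ℝ) ≤ B := by linarith
  have hABq : B/4 < A := by
    set t := Real.exp (-(B+1)) with ht
    have ht0 : 0 < t := Real.exp_pos _
    have ht1 : t < 1 := by
      rw [ht]
      exact Real.exp_lt_one_iff.mpr (by linarith)
    have hlog : Real.log t = -(B+1) := Real.log_exp _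
    have hlog2 : Real.log (1 - t) ≤ 0 := Real.log_nonpos (by linarith) (by linarith)
    have hHt : (B+1) * t ≤ H t := by
      unfold H; rw [hlog]; nlinarith
    have := hfle t ⟨le_of_lt ht0, le_of_lt ht1⟩
    nlinarith [mul_nonneg hB0' (sq_nonneg t), ht0]
  have hA0 : 0 < A := by linarith
  have hB0 : 0 < B := by linarith
  have hs2 : Real.sqrt (A*B) ^ 2 = A * B := Real.sq_sqrt (by positivity)
  have hs0 : 0 < Real.sqrt (A*B) := Real.sqrt_pos.mpr (by positivity)
  have hden : 0 < 4*A - B := by linarith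
  have hV0 : 0 < V := by
    rw [hV]
    apply div_pos (by nlinarith) hden
  have hVx : ∀ x : ℝ, 0 ≤ x → 0 < 1 + V * x := by
    intro x hx; nlinarith
  have huv : U * V = B := by
    rw [hU, hV, ← mul_div_assoc, div_eq_iff (ne_of_gt hden)]
    linear_combination 4 * hs2
  have hmv : M * V = U + B := by
    rw [hU, hV, hM, ← mul_div_assoc, div_eq_iff (ne_of_gt hden)]
    ring
  have key : ∀ x : ℝ, 0 ≤ x → g x = (B * (x - 1/2)^2 + H x - A) / (1 + V * x) := by
    intro x hx
    have h0 : (1 + V * x) ≠ 0 := ne_of_gt (hVx x hx)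
    rw [hg]
    simp only
    rw [eq_div_iff h0, add_mul, div_mul_cancel₀ _ h0]
    linear_combination x^2 * huv - x * hmv - hM
  -- f (1/2) = log 2
  have hH2 : H (1/2 : ℝ) = Real.log 2 := by
    unfold H
    have : Real.log (1/2 : ℝ) = -Real.log 2 := by
      rw [one_div, Real.log_inv]
    rw [show (1:ℝ) - 1/2 = 1/2 by norm_num, this]
    ring
  -- a point beating 1/2
  set u : ℝ := (B-2)/(2*(B+2)) with hu_def
  have hBp : (0:ℝ) < B + 2 := by linarith
  have hu0 : 0 < u := div_pos (by linarith) (by linarith)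
  have hu1 : u < 1/2 := by
    rw [hu_def, div_lt_iff₀ (by linarith)]
    linarith
  have h1m : (0:ℝ) < 1 - u := by linarith
  have h1p : (0:ℝ) < 1 + u := by linarith
  have hb1 : Real.log (1+u) + Real.log (1-u) ≤ -u^2 := by
    rw [← Real.log_mul (ne_of_gt h1p) (ne_of_gt h1m)]
    have := Real.log_le_sub_one_of_pos (show (0:ℝ) < (1+u)*(1-u) by nlinarith)
    nlinarith
  have hb2 : Real.log (1+u) - Real.log (1-u) ≤ 2*u/(1-u) := by
    have h := Real.log_le_sub_one_of_pos (show (0:ℝ) < (1+u)/(1-u) by positivity)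
    rw [Real.log_div (ne_of_gt h1p) (ne_of_gt h1m)] at h
    have h2 : (1+u)/(1-u) - 1 = 2*u/(1-u) := by field_simp; ring
    linarith [h2 ▸ h]
  have hinv : 1/(1-u) < B/4 + 1/2 := by
    rw [div_lt_iff₀ h1m]
    have h1mu : 1 - u = (B+6)/(2*(B+2)) := by
      rw [hu_def]; field_simp; ring
    rw [h1mu, ← sub_pos]
    have hB6 : (0:ℝ) < B + 6 := by linarith
    field_simp
    nlinarith
  have hHx₁ : H ((1+u)/2) = Real.log 2 -
      ((1/2)*(Real.log (1+u) + Real.log (1-u)) + (u/2)*(Real.log (1+u) - Real.log (1-u))) := by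
    unfold H
    have e1 : (1:ℝ) - (1+u)/2 = (1-u)/2 := by ring
    rw [e1, Real.log_div (ne_of_gt h1p) two_ne_zero, Real.log_div (ne_of_gt h1m) two_ne_zero]
    ring
  have hx₁mem : (1+u)/2 ∈ Set.Icc (0:ℝ) 1 := ⟨by linarith, by linarith⟩
  have hfx₁ : Real.log 2 < B * ((1+u)/2 - 1/2)^2 + H ((1+u)/2) := by
    rw [hHx₁]
    have e2 : ((1+u)/2 - 1/2) = u/2 := by ring
    rw [e2]
    have hD2 : (u/2)*(Real.log (1+u) - Real.log (1-u)) ≤ (u/2)*(2*u/(1-u)) :=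
      mul_le_mul_of_nonneg_left hb2 (by linarith)
    have hD3 : (u/2)*(2*u/(1-u)) = u^2 * (1/(1-u)) := by field_simp
    have hD4 : u^2 * (1/(1-u)) < u^2 * (B/4 + 1/2) :=
      mul_lt_mul_of_pos_left hinv (pow_pos hu0 2)
    nlinarith
  have hAgt : Real.log 2 < A := lt_of_lt_of_le hfx₁ (hfle _ hx₁mem)
  have hx₀ne : x₀ ≠ 1/2 := by
    intro h
    rw [h] at hx₀
    rw [show ((1:ℝ)/2 - 1/2) = 0 by norm_num] at hx₀
    rw [hH2] at hx₀
    simp at hx₀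
    linarith
  constructor
  · intro x hx
    rw [key x hx.1]
    apply div_nonpos_of_nonpos_of_nonneg
    · linarith [hfle x hx]
    · linarith [hVx x hx.1]
  · refine ⟨x₀, hx₀mem, 1 - x₀, ⟨by linarith [hx₀mem.2], by linarith [hx₀mem.1]⟩, ?_, ?_, ?_⟩
    · intro h
      apply hx₀ne
      linarith
    · rw [key x₀ hx₀mem.1]
      have : B * (x₀ - 1/2)^2 + H x₀ - A = 0 := by rw [hx₀]; ring
      rw [this, zero_div]
    · rw [key (1 - x₀) (by linarith [hx₀mem.2])]
      have : B * ((1 - x₀) - 1/2)^2 + H (1 - x₀) - A = 0 := by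
        rw [H_symm]
        rw [show ((1 - x₀) - 1/2) = -(x₀ - 1/2) by ring, neg_sq, hx₀]
        ring
      rw [this, zero_div]
end

section
/- Let ψ_a, ψ_b, λ, ℓ_a, ℓ_b be positive reals with ψ_a > ψ_b and integers ℓ_a > ℓ_b ≥ 1, and define f(x) = (1/λ)·(log(ℓ_a/ℓ_b)·x + log ℓ_b) + H(x)/(ψ_a·x + ψ_b·(1-x)) on [0,1]. If log(ℓ_a/ℓ_b)·ψ_b/λ = U, (ψ_a-ψ_b)/ψ_b = V, with U, V, M as derived from constants A, B satisfying B > 2 and A = max_{[0,1]}(B(x-1/2)²+H(x)), then f attains its maximum over [0,1] at at least two distinct points. -/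
open Real Set

lemma sum3 (x : ℝ) : (∑ i ∈ Finset.range 3, x ^ (i + 1) / (i + 1)) = x + x^2/2 + x^3/3 := by
  simp [Finset.sum_range_succ]
  ring

lemma S_le {t : ℝ} (h0 : 0 ≤ t) (h2 : t ≤ 1/2) :
    (1+t)*Real.log (1+t) + (1-t)*Real.log (1-t) ≤ t^2 + 5*t^4 := by
  have habs : |t| < 1 := by rw [abs_of_nonneg h0]; linarith
  have habs' : |(-t)| < 1 := by rwa [abs_neg]
  have e1 := Real.abs_log_sub_add_sum_range_le habs 3
  have e2 := Real.abs_log_sub_add_sum_range_le habs' 3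
  rw [sum3, abs_of_nonneg h0] at e1
  rw [sum3, abs_neg, abs_of_nonneg h0] at e2
  have h1t : (1:ℝ) - t ≥ 1/2 := by linarith
  have hb : t^4 / (1-t) ≤ 2*t^4 := by
    rw [div_le_iff₀ (by linarith)]
    nlinarith [pow_nonneg h0 4]
  have l1 : Real.log (1-t) ≤ -t - t^2/2 - t^3/3 + 2*t^4 := by
    have := (abs_le.mp e1).2
    linarith
  have l2 : Real.log (1+t) ≤ t - t^2/2 + t^3/3 + 2*t^4 := by
    have h' := (abs_le.mp e2).2
    have heq : (1:ℝ) - -t = 1 + t := by ring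
    rw [heq] at h'
    have h'' : -t + (-t)^2/2 + (-t)^3/3 + Real.log (1+t) ≤ t^4/(1-t) := h'
    nlinarith
  nlinarith [mul_le_mul_of_nonneg_left l1 (by linarith : (0:ℝ) ≤ 1 - t),
    mul_le_mul_of_nonneg_left l2 (by linarith : (0:ℝ) ≤ 1 + t),
    pow_nonneg h0 4, pow_nonneg h0 3]

set_option maxHeartbeats 1000000 in
theorem f_two_max_points (A B : ℝ) (hB : 2 < B)
    (hA : IsGreatest ((fun x => B * (x - 1/2)^2 + H x) '' Set.Icc 0 1) A)
    (U V M : ℝ) (hU : U = Real.sqrt (A * B) - B/2)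
    (hV : V = (2 * B + 4 * Real.sqrt (A * B)) / (4 * A - B)) (hM : M = A - B/4)
    (ψa ψb lam : ℝ) (la lb : ℕ) (hla : 0 < lb) (hlab : lb < la)
    (hψb : ψb = 1) (hψa : ψa = 1 + V) (hψ : ψb < ψa)
    (hlq : B * (1 + V) / V < Real.log ((la : ℝ) / lb))
    (hlam : lam = Real.log ((la : ℝ) / lb) * V / B)
    (hUrel : Real.log ((la : ℝ) / lb) * ψb / lam = U)
    (hVrel : (ψa - ψb) / ψb = V)
    (f : ℝ → ℝ)
    (hf : f = fun x => (1 / lam) * (Real.log ((la : ℝ) / lb) * x + Real.log lb) +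
        H x / (ψa * x + ψb * (1 - x))) :
    ∃ x₁ ∈ Set.Icc (0:ℝ) 1, ∃ x₂ ∈ Set.Icc (0:ℝ) 1, x₁ ≠ x₂ ∧
      IsMaxOn f (Set.Icc 0 1) x₁ ∧ IsMaxOn f (Set.Icc 0 1) x₂ := by
  obtain ⟨⟨x₀, hx₀I, hx₀⟩, hub⟩ := hA
  simp only at hx₀
  have hle : ∀ x ∈ Set.Icc (0:ℝ) 1, B * (x - 1/2)^2 + H x ≤ A := by
    intro x hx
    exact hub ⟨x, hx, rfl⟩
  have hB0 : (0:ℝ) < B := by linarith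
  -- A > B/4
  have hAB4 : B/4 < A := by
    set ε := Real.exp (-(B+1)) with hε
    have hε0 : 0 < ε := Real.exp_pos _
    have hε1 : ε < 1 := by
      rw [hε]
      exact Real.exp_lt_one_iff.mpr (by linarith)
    have hεI : ε ∈ Set.Icc (0:ℝ) 1 := ⟨le_of_lt hε0, le_of_lt hε1⟩
    have hlogε : Real.log ε = -(B+1) := Real.log_exp _
    have hH : H ε ≥ ε * (B+1) := by
      unfold H
      have h1 : (1 - ε) * Real.log (1 - ε) ≤ 0 := by
        apply mul_nonpos_of_nonneg_of_nonpos
        · linarith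
        · exact Real.log_nonpos (by linarith) (by linarith)
      rw [hlogε]
      nlinarith
    have := hle ε hεI
    nlinarith [sq_nonneg ε, hε0]
  -- A > log 2
  have hAlog2 : Real.log 2 < A := by
    set t := min (1/2 : ℝ) ((B-2)/6) with ht
    have ht0 : 0 < t := lt_min (by norm_num) (by linarith)
    have ht12 : t ≤ 1/2 := min_le_left _ _
    have htB : t ≤ (B-2)/6 := min_le_right _ _
    have hxI : (1/2 + t/2 : ℝ) ∈ Set.Icc (0:ℝ) 1 := ⟨by linarith, by linarith⟩
    have hHx : H (1/2 + t/2) =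
        Real.log 2 - ((1+t)*Real.log (1+t) + (1-t)*Real.log (1-t))/2 := by
      unfold H
      rw [show (1:ℝ) - (1/2 + t/2) = (1-t)/2 by ring, show (1:ℝ)/2 + t/2 = (1+t)/2 by ring]
      rw [Real.log_div (by linarith) (by norm_num), Real.log_div (by linarith) (by norm_num)]
      ring
    have hS := S_le (le_of_lt ht0) ht12
    have hphi := hle (1/2 + t/2) hxI
    rw [hHx, show (1/2 + t/2 - 1/2 : ℝ)^2 = t^2/4 by ring] at hphi
    have ht2 : t^2 ≤ (1/2) * ((B-2)/6) := by nlinarith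
    have h10 : (B-2)/6 ≤ B - 2 - 10*t^2 := by linarith
    have hkey2 : t^2 * ((B-2)/6) ≤ t^2 * (B - 2 - 10*t^2) :=
      mul_le_mul_of_nonneg_left h10 (sq_nonneg t)
    have hkey3 : 0 < t^2 * ((B-2)/6) := mul_pos (by positivity) (by linarith)
    nlinarith [hkey2, hkey3, hS, hphi]
  -- x₀ ≠ 1/2
  have hx₀ne : x₀ ≠ 1/2 := by
    intro h
    rw [h] at hx₀
    have hH12 : H (1/2) = Real.log 2 := by
      unfold H
      rw [show (1:ℝ) - 1/2 = 1/2 by norm_num, show (1:ℝ)/2 = 2⁻¹ by norm_num, Real.log_inv]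
      ring
    rw [hH12] at hx₀
    have : B * (1/2 - 1/2)^2 = 0 := by ring
    nlinarith
  -- sqrt facts
  have hAB0 : (0:ℝ) ≤ A * B := by nlinarith
  set s := Real.sqrt (A * B) with hs
  have hs0 : 0 ≤ s := Real.sqrt_nonneg _
  have hs2 : s^2 = A * B := Real.sq_sqrt hAB0
  have h4AB : 0 < 4*A - B := by linarith
  have hU0 : 0 < U := by
    rw [hU]
    nlinarith
  have hV0 : 0 < V := by
    rw [hV]
    apply div_pos (by nlinarith) h4AB
  have hUV : U * V = B := by
    rw [hU, hV]
    field_simp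
    nlinarith
  have hVM : V * M = U + B := by
    rw [hU, hV, hM]
    field_simp
    ring
  -- lam > 0 and log = U * lam
  have hL0 : 0 < Real.log ((la : ℝ) / lb) := by
    have : 0 < B * (1 + V) / V := by positivity
    linarith
  have hlam0 : 0 < lam := by
    rw [hlam]; positivity
  have hLU : Real.log ((la : ℝ) / lb) = U * lam := by
    rw [hψb] at hUrel
    field_simp at hUrel
    linarith
  -- rewrite f
  have hfx : ∀ x, f x = U * x + Real.log lb / lam + H x / (1 + V * x) := by
    intro x
    rw [hf, hψa, hψb]
    simp only
    rw [hLU]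
    have : (1 + V) * x + 1 * (1 - x) = 1 + V * x := by ring
    rw [this]
    field_simp
  have hden : ∀ x : ℝ, x ∈ Set.Icc (0:ℝ) 1 → 0 < 1 + V * x := by
    intro x hx
    nlinarith [hx.1]
  -- key identity
  have hkeyid : ∀ x : ℝ, (1 + V * x) * (M - U * x) = A - B * (x - 1/2)^2 := by
    intro x
    linear_combination x*hVM - x^2*hUV + hM
  -- upper bound
  have hupper : ∀ x ∈ Set.Icc (0:ℝ) 1, f x ≤ M + Real.log lb / lam := by
    intro x hx
    rw [hfx x]
    have h1 : H x ≤ A - B * (x - 1/2)^2 := by have := hle x hx; linarith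
    have h2 : H x / (1 + V * x) ≤ M - U * x := by
      rw [div_le_iff₀ (hden x hx)]
      calc H x ≤ A - B * (x - 1/2)^2 := h1
        _ = (1 + V * x) * (M - U * x) := (hkeyid x).symm
        _ = (M - U * x) * (1 + V * x) := by ring
    linarith
  -- equality at maximizers
  have heq : ∀ x ∈ Set.Icc (0:ℝ) 1, B * (x - 1/2)^2 + H x = A →
      f x = M + Real.log lb / lam := by
    intro x hx hmax
    rw [hfx x]
    have h2 : H x / (1 + V * x) = M - U * x := by
      rw [div_eq_iff (ne_of_gt (hden x hx))]
      have : H x = A - B * (x - 1/2)^2 := by linarith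
      rw [this, ← hkeyid x]; ring
    rw [h2]; ring
  -- the two points
  have hx₁I : (1 - x₀) ∈ Set.Icc (0:ℝ) 1 := ⟨by linarith [hx₀I.2], by linarith [hx₀I.1]⟩
  have hφ1 : B * ((1 - x₀) - 1/2)^2 + H (1 - x₀) = A := by
    rw [H_symm]
    rw [show ((1 - x₀) - 1/2)^2 = (x₀ - 1/2)^2 by ring]
    exact hx₀
  have hne : x₀ ≠ 1 - x₀ := by
    intro h
    apply hx₀ne
    linarith
  have hf₀ : f x₀ = M + Real.log lb / lam := heq x₀ hx₀I hx₀
  have hf₁ : f (1 - x₀) = M + Real.log lb / lam := heq (1 - x₀) hx₁I hφ1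
  refine ⟨x₀, hx₀I, 1 - x₀, hx₁I, hne, ?_, ?_⟩
  · intro x hx
    simp only [Set.mem_setOf_eq, hf₀]
    exact hupper x hx
  · intro x hx
    simp only [Set.mem_setOf_eq, hf₁]
    exact hupper x hx
end
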